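/- arXiv:1311.2177 — 2 statements merged into one kernel-verified Lean document; each statement's English description precedes it below -/
import Mathlib

section
/- For a nontrivial real Banach space X: X has the local diameter 2 property if and only if the dual X* is locally octahedral. -/
open Metric Set

noncomputable section

/-- A slice of the closed unit ball determined by `f ∈ S_{X*}` and `α > 0` is
`{x ∈ B_X : f x > 1 - α}`.  `X` has the local diameter 2 property if every slice
of `B_X` has diameter 2. -/
def LocalDiameterTwoProp (X : Type*) [NormedAddCommGroup X] [NormedSpace ℝ X] : Prop :=
  ∀ f : X →L[ℝ] ℝ, ‖f‖ = 1 → ∀ α : ℝ, 0 < α →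
    Metric.diam {x : X | ‖x‖ ≤ 1 ∧ 1 - α < f x} = 2

/-- `X` has the diameter 2 property if every nonempty relatively weakly open
subset of `B_X` has diameter 2. -/
def DiameterTwoProp (X : Type*) [NormedAddCommGroup X] [NormedSpace ℝ X] : Prop :=
  ∀ U : Set (WeakSpace ℝ X), IsOpen U →
    {x : X | ‖x‖ ≤ 1 ∧ toWeakSpace ℝ X x ∈ U}.Nonempty →
    Metric.diam {x : X | ‖x‖ ≤ 1 ∧ toWeakSpace ℝ X x ∈ U} = 2

/-- `X` has the strong diameter 2 property if every convex combination of slices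
of `B_X` has diameter 2. -/
def StrongDiameterTwoProp (X : Type*) [NormedAddCommGroup X] [NormedSpace ℝ X] : Prop :=
  ∀ (n : ℕ) (lam : Fin n → ℝ) (f : Fin n → X →L[ℝ] ℝ) (α : Fin n → ℝ),
    (∀ i, 0 ≤ lam i) → (∑ i, lam i) = 1 → (∀ i, ‖f i‖ = 1) → (∀ i, 0 < α i) →
    Metric.diam {x : X | ∃ g : Fin n → X,
      (∀ i, ‖g i‖ ≤ 1 ∧ 1 - α i < f i (g i)) ∧ x = ∑ i, lam i • g i} = 2

/-- The dual of `X` has the weak* local diameter 2 property if every weak* slice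
`{f ∈ B_{X*} : f x > 1 - α}` (with `x ∈ S_X`, `α > 0`) has diameter 2. -/
def WStarLocalDiameterTwoProp (X : Type*) [NormedAddCommGroup X] [NormedSpace ℝ X] : Prop :=
  ∀ x : X, ‖x‖ = 1 → ∀ α : ℝ, 0 < α →
    Metric.diam {f : X →L[ℝ] ℝ | ‖f‖ ≤ 1 ∧ 1 - α < f x} = 2

/-- The dual of `X` has the weak* diameter 2 property if every nonempty relatively
weak* open subset of `B_{X*}` has diameter 2. -/
def WStarDiameterTwoProp (X : Type*) [NormedAddCommGroup X] [NormedSpace ℝ X] : Prop :=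
  ∀ U : Set (WeakDual ℝ X), IsOpen U →
    {f : X →L[ℝ] ℝ | ‖f‖ ≤ 1 ∧ StrongDual.toWeakDual f ∈ U}.Nonempty →
    Metric.diam {f : X →L[ℝ] ℝ | ‖f‖ ≤ 1 ∧ StrongDual.toWeakDual f ∈ U} = 2

/-- The dual of `X` has the weak* strong diameter 2 property if every convex
combination of weak* slices of `B_{X*}` has diameter 2. -/
def WStarStrongDiameterTwoProp (X : Type*) [NormedAddCommGroup X] [NormedSpace ℝ X] : Prop :=
  ∀ (n : ℕ) (lam : Fin n → ℝ) (x : Fin n → X) (α : Fin n → ℝ),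
    (∀ i, 0 ≤ lam i) → (∑ i, lam i) = 1 → (∀ i, ‖x i‖ = 1) → (∀ i, 0 < α i) →
    Metric.diam {f : X →L[ℝ] ℝ | ∃ g : Fin n → (X →L[ℝ] ℝ),
      (∀ i, ‖g i‖ ≤ 1 ∧ 1 - α i < g i (x i)) ∧ f = ∑ i, lam i • g i} = 2

/-- `X` is locally octahedral. -/
def LocallyOctahedral (X : Type*) [NormedAddCommGroup X] [NormedSpace ℝ X] : Prop :=
  ∀ x : X, ∀ ε : ℝ, 0 < ε → ∃ y : X, ‖y‖ = 1 ∧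
    ∀ s : ℝ, (1 - ε) * (|s| * ‖x‖ + ‖y‖) ≤ ‖s • x + y‖

/-- `X` is weakly octahedral. -/
def WeaklyOctahedral (X : Type*) [NormedAddCommGroup X] [NormedSpace ℝ X] : Prop :=
  ∀ E : Subspace ℝ X, FiniteDimensional ℝ E → ∀ f : X →L[ℝ] ℝ, ‖f‖ ≤ 1 →
    ∀ ε : ℝ, 0 < ε → ∃ y : X, ‖y‖ = 1 ∧
      ∀ x ∈ E, (1 - ε) * (|f x| + ‖y‖) ≤ ‖x + y‖

/-- The norm on `X` is octahedral. -/
def Octahedral (X : Type*) [NormedAddCommGroup X] [NormedSpace ℝ X] : Prop :=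
  ∀ E : Subspace ℝ X, FiniteDimensional ℝ E → ∀ ε : ℝ, 0 < ε →
    ∃ y : X, ‖y‖ = 1 ∧ ∀ x ∈ E, (1 - ε) * (‖x‖ + ‖y‖) ≤ ‖x + y‖

/-!
Both properties are equivalent to the same condition on the unit sphere of `X*`: for every
`f ∈ S_{X*}` and `ε > 0` there is `g ∈ S_{X*}` with `‖f + g‖ ≥ 2 - ε` and `‖f - g‖ ≥ 2 - ε`.

For local octahedrality this is the case `s = ±1` of the defining inequality; conversely, writing
`s • f + g` as `(f + g) - (1 - s) • f` for `0 ≤ s ≤ 1` and as `s • (f + g) - (s - 1) • g` for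
`s ≥ 1`, the triangle inequality gives `‖s • f + g‖ ≥ (1 - ε) (|s| + 1)`.

For slices: two almost antipodal points `x, y` of a thin slice of `f`, normed by `g`
(`g (x - y) = ‖x - y‖`), give `(f + g) x ≈ 2` and `(f - g) y ≈ 2`; conversely, points almost
norming `f + g` and `f - g` lie in a thin slice of `f` and are almost antipodal for `g`.
-/

section Diameter

variable {α : Type*} [PseudoMetricSpace α] {s : Set α} {r : ℝ}

theorem exists_lt_dist_of_lt_diam (hr : 0 ≤ r) (h : r < diam s) :
    ∃ x ∈ s, ∃ y ∈ s, r < dist x y := by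
  by_contra! H
  linarith [diam_le_of_forall_dist_le hr H]

theorem le_diam_of_forall_sub_lt_dist (hs : Bornology.IsBounded s)
    (h : ∀ δ > 0, ∃ x ∈ s, ∃ y ∈ s, r - δ < dist x y) : r ≤ diam s := by
  refine le_of_forall_pos_le_add fun δ hδ => ?_
  obtain ⟨x, hx, y, hy, hxy⟩ := h δ hδ
  linarith [dist_le_diam_of_mem hs hx hy]

end Diameter

section LocallyOctahedral

variable {Z : Type*} [NormedAddCommGroup Z] [NormedSpace ℝ Z]

theorem mul_add_one_le_norm_smul_add {z y : Z} {ε s : ℝ} (hz : ‖z‖ ≤ 1) (hy : ‖y‖ ≤ 1)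
    (h : 2 - ε ≤ ‖z + y‖) (hs : 0 ≤ s) : (1 - ε) * (s + 1) ≤ ‖s • z + y‖ := by
  have hε : 0 ≤ ε := by linarith [norm_add_le z y]
  rcases le_total s 1 with hs1 | hs1
  · have hsz : ‖(1 - s) • z‖ ≤ 1 - s := by
      rw [norm_smul, Real.norm_of_nonneg (by linarith)]
      exact mul_le_of_le_one_right (by linarith) hz
    have := norm_sub_norm_le (z + y) ((1 - s) • z)
    rw [show z + y - (1 - s) • z = s • z + y by module] at this
    nlinarith
  · have hsy : ‖(s - 1) • y‖ ≤ s - 1 := by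
      rw [norm_smul, Real.norm_of_nonneg (by linarith)]
      exact mul_le_of_le_one_right (by linarith) hy
    have := norm_sub_norm_le (s • (z + y)) ((s - 1) • y)
    rw [show s • (z + y) - (s - 1) • y = s • z + y by module, norm_smul,
      Real.norm_of_nonneg hs] at this
    nlinarith

theorem mul_abs_add_one_le_norm_smul_add {z y : Z} {ε : ℝ} (hz : ‖z‖ ≤ 1) (hy : ‖y‖ ≤ 1)
    (hadd : 2 - ε ≤ ‖z + y‖) (hsub : 2 - ε ≤ ‖z - y‖) (s : ℝ) :
    (1 - ε) * (|s| + 1) ≤ ‖s • z + y‖ := by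
  rcases le_total 0 s with hs | hs
  · rw [abs_of_nonneg hs]
    exact mul_add_one_le_norm_smul_add hz hy hadd hs
  · have hadd' : 2 - ε ≤ ‖-z + y‖ := by rwa [neg_add_eq_sub, norm_sub_rev]
    rw [abs_of_nonpos hs, ← neg_smul_neg]
    exact mul_add_one_le_norm_smul_add (by rwa [norm_neg]) hy hadd' (by linarith)

theorem locallyOctahedral_iff_exists_norm_add_ge_and_norm_sub_ge [Nontrivial Z] :
    LocallyOctahedral Z ↔ ∀ z : Z, ‖z‖ = 1 → ∀ ε > 0,
      ∃ y : Z, ‖y‖ = 1 ∧ 2 - ε ≤ ‖z + y‖ ∧ 2 - ε ≤ ‖z - y‖ := by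
  constructor
  · intro h z hz ε hε
    obtain ⟨y, hy, hzy⟩ := h z (ε / 2) (by positivity)
    have hadd := hzy 1
    have hsub := hzy (-1)
    rw [hz, hy] at hadd hsub
    rw [neg_one_smul, neg_add_eq_sub, norm_sub_rev] at hsub
    rw [one_smul, abs_one] at hadd
    rw [abs_neg, abs_one] at hsub
    exact ⟨y, hy, by linarith, by linarith⟩
  · intro h x ε hε
    rcases eq_or_ne x 0 with rfl | hx
    · obtain ⟨y, hy⟩ := exists_norm_eq Z zero_le_one
      refine ⟨y, hy, fun s => ?_⟩
      simp only [norm_zero, mul_zero, zero_add, smul_zero, hy]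
      linarith
    · have hnx : ‖x‖ ≠ 0 := norm_ne_zero_iff.mpr hx
      have hu : ‖‖x‖⁻¹ • x‖ = 1 := by rw [norm_smul, norm_inv, norm_norm, inv_mul_cancel₀ hnx]
      obtain ⟨y, hy, hadd, hsub⟩ := h (‖x‖⁻¹ • x) hu ε hε
      refine ⟨y, hy, fun s => ?_⟩
      have := mul_abs_add_one_le_norm_smul_add hu.le hy.le hadd hsub (s * ‖x‖)
      rw [hy]
      rwa [smul_smul, mul_assoc, mul_inv_cancel₀ hnx, mul_one, abs_mul, abs_norm] at this

end LocallyOctahedral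

section Slices

variable {Z : Type*} [NormedAddCommGroup Z] [NormedSpace ℝ Z]

theorem abs_apply_le_norm_of_norm_le_one (φ : StrongDual ℝ Z) {x : Z} (hx : ‖x‖ ≤ 1) :
    |φ x| ≤ ‖φ‖ := by
  simpa using φ.le_of_opNorm_le_of_le le_rfl hx

theorem exists_norm_le_one_lt_apply (φ : StrongDual ℝ Z) {r : ℝ} (hr : r < ‖φ‖) :
    ∃ x : Z, ‖x‖ ≤ 1 ∧ r < φ x := by
  obtain ⟨x, hx, hrx⟩ := φ.exists_lt_apply_of_lt_opNorm hr
  rw [Real.norm_eq_abs] at hrx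
  rcases abs_cases (φ x) with ⟨habs, -⟩ | ⟨habs, -⟩
  · exact ⟨x, hx.le, habs ▸ hrx⟩
  · exact ⟨-x, by rw [norm_neg]; exact hx.le, by rw [map_neg]; linarith⟩

theorem LocalDiameterTwoProp.exists_norm_add_ge_and_norm_sub_ge (h : LocalDiameterTwoProp Z)
    (f : StrongDual ℝ Z) (hf : ‖f‖ = 1) (ε : ℝ) (hε : 0 < ε) :
    ∃ g : StrongDual ℝ Z, ‖g‖ = 1 ∧ 2 - ε ≤ ‖f + g‖ ∧ 2 - ε ≤ ‖f - g‖ := by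
  obtain ⟨δ, hδ, hδ1, hδε⟩ : ∃ δ > 0, δ ≤ 1 ∧ δ ≤ ε :=
    ⟨min ε 1, lt_min hε one_pos, min_le_right ε 1, min_le_left ε 1⟩
  have hslice := h f hf (δ / 2) (by positivity)
  obtain ⟨x, ⟨hx, hfx⟩, y, ⟨hy, hfy⟩, hxy⟩ :=
    exists_lt_dist_of_lt_diam (r := 2 - δ / 2) (by linarith) (by rw [hslice]; linarith)
  rw [dist_eq_norm] at hxy
  obtain ⟨g, hg, hgxy⟩ := exists_dual_vector ℝ (x - y) (by linarith [norm_nonneg (x - y)])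
  rw [map_sub, RCLike.ofReal_real_eq_id, id] at hgxy
  have hgx := abs_le.mp ((abs_apply_le_norm_of_norm_le_one g hx).trans hg.le)
  have hgy := abs_le.mp ((abs_apply_le_norm_of_norm_le_one g hy).trans hg.le)
  have hfgx := le_of_abs_le (abs_apply_le_norm_of_norm_le_one (f + g) hx)
  have hfgy := le_of_abs_le (abs_apply_le_norm_of_norm_le_one (f - g) hy)
  rw [add_apply] at hfgx
  rw [sub_apply] at hfgy
  exact ⟨g, hg, by linarith, by linarith⟩

theorem localDiameterTwoProp_of_exists_norm_add_ge_and_norm_sub_ge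
    (h : ∀ f : StrongDual ℝ Z, ‖f‖ = 1 → ∀ ε > 0,
      ∃ g : StrongDual ℝ Z, ‖g‖ = 1 ∧ 2 - ε ≤ ‖f + g‖ ∧ 2 - ε ≤ ‖f - g‖) :
    LocalDiameterTwoProp Z := by
  intro f hf α hα
  have hball : {x : Z | ‖x‖ ≤ 1 ∧ 1 - α < f x} ⊆ closedBall 0 1 :=
    fun x hx => mem_closedBall_zero_iff.mpr hx.1
  refine le_antisymm (by simpa using diam_le_of_subset_closedBall zero_le_one hball)
    (le_diam_of_forall_sub_lt_dist (isBounded_closedBall.subset hball) fun δ hδ => ?_)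
  obtain ⟨η, hη, hηα, hηδ⟩ : ∃ η > 0, 2 * η ≤ α ∧ 4 * η ≤ δ :=
    ⟨min α δ / 4, by positivity, by linarith [min_le_left α δ], by linarith [min_le_right α δ]⟩
  obtain ⟨g, hg, hadd, hsub⟩ := h f hf η hη
  obtain ⟨x, hx, hfgx⟩ := exists_norm_le_one_lt_apply (f + g) (by linarith : 2 - 2 * η < ‖f + g‖)
  obtain ⟨y, hy, hfgy⟩ := exists_norm_le_one_lt_apply (f - g) (by linarith : 2 - 2 * η < ‖f - g‖)
  rw [add_apply] at hfgx
  rw [sub_apply] at hfgy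
  have hfx := le_of_abs_le ((abs_apply_le_norm_of_norm_le_one f hx).trans hf.le)
  have hfy := le_of_abs_le ((abs_apply_le_norm_of_norm_le_one f hy).trans hf.le)
  have hgx := abs_le.mp ((abs_apply_le_norm_of_norm_le_one g hx).trans hg.le)
  have hgy := abs_le.mp ((abs_apply_le_norm_of_norm_le_one g hy).trans hg.le)
  have hgxy : g (x - y) ≤ ‖x - y‖ := by
    simpa using le_of_abs_le (g.le_of_opNorm_le_of_le hg.le (le_refl ‖x - y‖))
  rw [map_sub] at hgxy
  refine ⟨x, ⟨hx, by linarith⟩, y, ⟨hy, by linarith⟩, ?_⟩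
  rw [dist_eq_norm]
  linarith

theorem localDiameterTwoProp_iff_exists_norm_add_ge_and_norm_sub_ge :
    LocalDiameterTwoProp Z ↔ ∀ f : StrongDual ℝ Z, ‖f‖ = 1 → ∀ ε > 0,
      ∃ g : StrongDual ℝ Z, ‖g‖ = 1 ∧ 2 - ε ≤ ‖f + g‖ ∧ 2 - ε ≤ ‖f - g‖ :=
  ⟨LocalDiameterTwoProp.exists_norm_add_ge_and_norm_sub_ge,
    localDiameterTwoProp_of_exists_norm_add_ge_and_norm_sub_ge⟩

end Slices

theorem stmt_6_general (X : Type*) [NormedAddCommGroup X] [NormedSpace ℝ X] [Nontrivial X] :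
    LocalDiameterTwoProp X ↔ LocallyOctahedral (StrongDual ℝ X) := by
  rw [localDiameterTwoProp_iff_exists_norm_add_ge_and_norm_sub_ge,
    locallyOctahedral_iff_exists_norm_add_ge_and_norm_sub_ge]

theorem stmt_6 (X : Type*) [NormedAddCommGroup X] [NormedSpace ℝ X] [CompleteSpace X] [Nontrivial X] :
    LocalDiameterTwoProp X ↔ LocallyOctahedral (StrongDual ℝ X) :=
  stmt_6_general X
end
end

section
/- For a nontrivial real Banach space X: the dual X* has the weak* diameter 2 property if and only if X is weakly octahedral. -/
open Metric Set

noncomputable section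

/-
Weak* neighbourhoods of `g ∈ B_{X*}` are cut out by finitely many evaluations, so they only see a
finite-dimensional subspace `E`. If `y` witnesses weak octahedrality for `E`, `g` and `ε`, the
functionals `x + t y ↦ (1 - ε) (g x ± t)` on `E + ℝ y` have norm at most one, and Hahn–Banach
extensions of them are two points of the neighbourhood at distance at least `2 (1 - ε)`.

Conversely, given `E`, `f` and `ε`, take a finite `ε/4`-net of the ball of radius `2/ε` in `E`.
The weak* diameter 2 property gives `g₁, g₂ ∈ B_{X*}` close to `f` on the net and a unit vector `y`
with `g₁ y ≈ 1` and `g₂ y ≈ -1`; then `‖x + y‖ ≥ max (g₁ (x + y)) (-g₂ (x + y)) ≈ |f x| + 1` on the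
ball, while outside it the triangle inequality alone suffices.
-/

open Filter Topology

section Diam

variable {α : Type*} [PseudoMetricSpace α] {s : Set α}

theorem Metric.exists_lt_dist_of_lt_diam {d : ℝ} (hd : 0 ≤ d) (h : d < diam s) :
    ∃ a ∈ s, ∃ b ∈ s, d < dist a b := by
  by_contra! hs
  exact (diam_le_of_forall_dist_le hd hs).not_gt h

theorem Metric.diam_eq_of_subset_closedBall_of_forall_lt_dist {c : α} {r : ℝ} (hr : 0 ≤ r)
    (hs : s ⊆ closedBall c r) (h : ∀ d < 2 * r, ∃ a ∈ s, ∃ b ∈ s, d < dist a b) :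
    diam s = 2 * r := by
  refine (diam_le_of_subset_closedBall hr hs).antisymm (le_of_forall_lt fun d hd => ?_)
  obtain ⟨a, ha, b, hb, hab⟩ := h d hd
  exact hab.trans_le (dist_le_diam_of_mem (isBounded_closedBall.subset hs) ha hb)

end Diam

theorem WeakDual.hasBasis_nhds_dist_lt {𝕜 E : Type*} [NormedField 𝕜] [AddCommMonoid E] [Module 𝕜 E]
    [TopologicalSpace E] (g : WeakDual 𝕜 E) :
    (𝓝 g).HasBasis (fun p : Set E × ℝ => p.1.Finite ∧ 0 < p.2)
      fun p => {h | ∀ x ∈ p.1, dist (h x) (g x) < p.2} := by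
  have hpi := hasBasis_pi_same_index (ι := E) (fun x => nhds_basis_ball (x := g x))
    fun I r hI hr => by
      obtain ⟨r₀, hr₀I, hr₀⟩ := (((eventually_all_finite hI).2 fun i hi =>
        eventually_lt_nhds (hr i hi)).filter_mono nhdsWithin_le_nhds).and
          (self_mem_nhdsWithin (s := Ioi (0:ℝ)) (a := 0)) |>.exists
      exact ⟨r₀, hr₀, fun i hi => ball_subset_ball (hr₀I i hi).le⟩
  have hg : 𝓝 g = comap (fun (h : WeakDual 𝕜 E) (x : E) => h x) (𝓝 fun x => g x) :=
    nhds_induced _ _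
  rw [hg, nhds_pi]
  exact hpi.comap _

namespace ContinuousLinearMap

variable {X : Type*} [NormedAddCommGroup X] [NormedSpace ℝ X]

theorem abs_apply_le_norm {f : X →L[ℝ] ℝ} (hf : ‖f‖ ≤ 1) (x : X) : |f x| ≤ ‖x‖ := by
  simpa using f.le_of_opNorm_le hf x

theorem exists_norm_eq_one_lt_apply (f : X →L[ℝ] ℝ) {r : ℝ} (hr : 0 ≤ r) (h : r < ‖f‖) :
    ∃ y : X, ‖y‖ = 1 ∧ r < f y := by
  obtain ⟨x, hx, hfx⟩ : ∃ x : X, ‖x‖ < 1 ∧ r < f x := by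
    obtain ⟨x, hx, hfx⟩ := f.exists_lt_apply_of_lt_opNorm h
    rcases lt_abs.1 hfx with hfx | hfx
    · exact ⟨x, hx, hfx⟩
    · exact ⟨-x, by rwa [norm_neg], by rwa [map_neg]⟩
  have hx0 : 0 < ‖x‖ := norm_pos_iff.2 fun h0 => by simp [h0] at hfx; linarith
  refine ⟨‖x‖⁻¹ • x, by rw [norm_smul, norm_inv, norm_norm, inv_mul_cancel₀ hx0.ne'], ?_⟩
  rw [map_smul, smul_eq_mul, ← div_eq_inv_mul, lt_div_iff₀ hx0]
  nlinarith

end ContinuousLinearMap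

section

variable {X : Type*} [NormedAddCommGroup X] [NormedSpace ℝ X]

theorem exists_extension_norm_le_one_of_abs_le {E : Submodule ℝ X} (g : X →L[ℝ] ℝ) (y : X) (a : ℝ)
    (h : ∀ x ∈ E, ∀ t : ℝ, |g x + t * a| ≤ ‖x + t • y‖) :
    ∃ φ : X →L[ℝ] ℝ, ‖φ‖ ≤ 1 ∧ (∀ x ∈ E, φ x = g x) ∧ φ y = a := by
  let f₁ : X →ₗ.[ℝ] ℝ := ⟨E, (g : X →ₗ[ℝ] ℝ).domRestrict E⟩
  have hy : ∀ c : ℝ, c • y = 0 → c • a = 0 := fun c hc => by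
    have := h 0 E.zero_mem c
    rwa [map_zero, zero_add, zero_add, hc, norm_zero, abs_nonpos_iff] at this
  let f₂ := LinearPMap.mkSpanSingleton' (σ := RingHom.id ℝ) y a hy
  -- on `E ∩ span {y}` the hypothesis at `x = -(c • y)` forces `g (c • y) = c * a`
  have hagree : ∀ (u : f₁.domain) (v : f₂.domain), (u : X) = v → f₁ u = f₂ v := by
    rintro ⟨u, hu⟩ ⟨v, hv⟩ (rfl : u = v)
    obtain ⟨c, rfl⟩ := Submodule.mem_span_singleton.1 hv
    have := h (-(c • y)) (E.neg_mem hu) c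
    rw [neg_add_cancel, norm_zero, abs_nonpos_iff, map_neg] at this
    rw [LinearPMap.mkSpanSingleton'_apply]
    exact neg_add_eq_zero.1 this
  obtain ⟨φ, hφf, hφ⟩ := exists_extension_of_le_sublinear (f₁.sup f₂ hagree) (‖·‖)
    (fun c hc x => by simp [norm_smul, abs_of_pos hc]) norm_add_le (by
      rintro ⟨z, hz⟩
      obtain ⟨u, hu, v, hv, rfl⟩ := Submodule.mem_sup.1 hz
      obtain ⟨c, rfl⟩ := Submodule.mem_span_singleton.1 hv
      refine (LinearPMap.sup_apply hagree ⟨u, hu⟩ ⟨c • y, hv⟩ _ rfl).trans_le ?_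
      rw [LinearPMap.mkSpanSingleton'_apply]
      exact (le_abs_self _).trans (h u hu c))
  have hφ_abs : ∀ x, |φ x| ≤ ‖x‖ := fun x =>
    abs_le.2 ⟨neg_le.2 (by simpa using hφ (-x)), hφ x⟩
  refine ⟨φ.mkContinuous 1 fun x => by simpa using hφ_abs x,
    LinearMap.mkContinuous_norm_le _ zero_le_one _, fun x hx => ?_, ?_⟩
  · exact (hφf ⟨x, Submodule.mem_sup_left hx⟩).trans
      ((f₁.left_le_sup f₂ hagree).2 (x := ⟨x, hx⟩) rfl).symm
  · have hy' := Submodule.mem_span_singleton_self (R := ℝ) y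
    exact (hφf ⟨y, Submodule.mem_sup_right hy'⟩).trans <|
      ((f₁.right_le_sup f₂ hagree).2 (x := ⟨y, hy'⟩) rfl).symm.trans
        (LinearPMap.mkSpanSingleton'_apply_self y a hy hy')

theorem mul_abs_add_norm_smul_le_norm_add_smul {E : Submodule ℝ X} {g : X →L[ℝ] ℝ} (hg : ‖g‖ ≤ 1)
    {ε : ℝ} (hε : 0 ≤ ε) {y : X} (hy : ∀ x ∈ E, (1 - ε) * (|g x| + ‖y‖) ≤ ‖x + y‖)
    {x : X} (hx : x ∈ E) (t : ℝ) : (1 - ε) * (|g x| + ‖t • y‖) ≤ ‖x + t • y‖ := by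
  rcases eq_or_ne t 0 with rfl | ht
  · simpa using by nlinarith [abs_nonneg (g x), g.abs_apply_le_norm hg x]
  calc (1 - ε) * (|g x| + ‖t • y‖) = |t| * ((1 - ε) * (|g (t⁻¹ • x)| + ‖y‖)) := by
        rw [map_smul, smul_eq_mul, abs_mul, abs_inv, norm_smul, Real.norm_eq_abs]
        field_simp
    _ ≤ |t| * ‖t⁻¹ • x + y‖ := by gcongr; exact hy _ (E.smul_mem _ hx)
    _ = ‖x + t • y‖ := by
        rw [← Real.norm_eq_abs, ← norm_smul, smul_add, smul_inv_smul₀ ht]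

theorem exists_extension_of_le_norm_add {E : Submodule ℝ X} {g : X →L[ℝ] ℝ} (hg : ‖g‖ ≤ 1)
    {ε : ℝ} (hε₀ : 0 ≤ ε) (hε₁ : ε ≤ 1) {y : X} (hy : ‖y‖ = 1)
    (hoct : ∀ x ∈ E, (1 - ε) * (|g x| + ‖y‖) ≤ ‖x + y‖) {c : ℝ} (hc : |c| ≤ 1) :
    ∃ φ : X →L[ℝ] ℝ, ‖φ‖ ≤ 1 ∧ (∀ x ∈ E, φ x = (1 - ε) * g x) ∧ φ y = (1 - ε) * c := by
  refine exists_extension_norm_le_one_of_abs_le ((1 - ε) • g) y _ fun x hx t => ?_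
  calc |((1 - ε) • g) x + t * ((1 - ε) * c)| = (1 - ε) * |g x + t * c| := by
        rw [smul_apply, smul_eq_mul, ← mul_left_comm, ← mul_add, abs_mul,
          abs_of_nonneg (sub_nonneg.2 hε₁)]
    _ ≤ (1 - ε) * (|g x| + ‖t • y‖) := by
        gcongr
        rw [norm_smul, hy, mul_one, Real.norm_eq_abs]
        exact (abs_add_le _ _).trans (by rw [abs_mul]; nlinarith [abs_nonneg t])
    _ ≤ ‖x + t • y‖ := mul_abs_add_norm_smul_le_norm_add_smul hg hε₀ hoct hx t

theorem WeaklyOctahedral.wStarDiameterTwoProp (hwo : WeaklyOctahedral X) :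
    WStarDiameterTwoProp X := by
  rintro U hU ⟨g, hg, hgU⟩
  obtain ⟨⟨s, η⟩, ⟨hs : s.Finite, hη : 0 < η⟩, hsU⟩ :=
    (WeakDual.hasBasis_nhds_dist_lt _).mem_iff.1 (hU.mem_nhds hgU)
  rw [show (2 : ℝ) = 2 * 1 by norm_num]
  refine diam_eq_of_subset_closedBall_of_forall_lt_dist (c := 0) zero_le_one
    (fun f hf => mem_closedBall_zero_iff.2 hf.1) fun d hd => ?_
  obtain ⟨ε, ⟨hε₁, hdε, hεs⟩, hε₀⟩ : ∃ ε : ℝ,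
      (ε ≤ 1 ∧ d < 2 * (1 - ε) ∧ ∀ x ∈ s, ε * ‖x‖ < η) ∧ 0 < ε := by
    refine (Eventually.and ?_ self_mem_nhdsWithin).exists (f := 𝓝[>] 0)
    refine Eventually.filter_mono nhdsWithin_le_nhds ?_
    refine (eventually_le_nhds one_pos).and (((continuousAt_const.eventually_lt (by fun_prop)
      (by simpa using hd))).and ((eventually_all_finite hs).2 fun x _ => ?_))
    exact continuousAt_id.mul continuousAt_const |>.eventually_lt continuousAt_const
      (by simpa using hη)
  let E := Submodule.span ℝ s
  obtain ⟨y, hy, hoct⟩ := hwo E (FiniteDimensional.span_of_finite ℝ hs) g hg ε hε₀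
  have hU : ∀ φ : X →L[ℝ] ℝ, ‖φ‖ ≤ 1 → (∀ x ∈ E, φ x = (1 - ε) * g x) →
      φ ∈ {f : X →L[ℝ] ℝ | ‖f‖ ≤ 1 ∧ StrongDual.toWeakDual f ∈ U} := by
    refine fun φ hφ hφE => ⟨hφ, hsU fun x hx => ?_⟩
    rw [StrongDual.toWeakDual_apply, StrongDual.toWeakDual_apply,
      hφE x (Submodule.subset_span hx), Real.dist_eq,
      show (1 - ε) * g x - g x = -(ε * g x) by ring, abs_neg, abs_mul, abs_of_pos hε₀]
    exact (mul_le_mul_of_nonneg_left (g.abs_apply_le_norm hg x) hε₀.le).trans_lt (hεs x hx)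
  obtain ⟨φ₁, hφ₁, hφ₁E, hφ₁y⟩ :=
    exists_extension_of_le_norm_add hg hε₀.le hε₁ hy hoct (c := 1) (by norm_num)
  obtain ⟨φ₂, hφ₂, hφ₂E, hφ₂y⟩ :=
    exists_extension_of_le_norm_add hg hε₀.le hε₁ hy hoct (c := -1) (by norm_num)
  refine ⟨φ₁, hU φ₁ hφ₁ hφ₁E, φ₂, hU φ₂ hφ₂ hφ₂E, ?_⟩
  calc d < (φ₁ - φ₂) y := by rw [sub_apply, hφ₁y, hφ₂y]; linarith
    _ ≤ ‖φ₁ - φ₂‖ := by simpa [hy] using le_abs_self _ |>.trans ((φ₁ - φ₂).le_opNorm y)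
    _ = dist φ₁ φ₂ := (dist_eq_norm _ _).symm

theorem abs_add_one_sub_le_norm_add {f g₁ g₂ : X →L[ℝ] ℝ} (hf : ‖f‖ ≤ 1) (hg₁ : ‖g₁‖ ≤ 1)
    (hg₂ : ‖g₂‖ ≤ 1) {x c y : X} {δ : ℝ} (hy₁ : 1 - δ < g₁ y) (hy₂ : g₂ y < δ - 1)
    (hc₁ : dist (g₁ c) (f c) < δ) (hc₂ : dist (g₂ c) (f c) < δ) (hxc : dist x c < δ) :
    |f x| + 1 - 4 * δ ≤ ‖x + y‖ := by
  rw [Real.dist_eq, abs_lt] at hc₁ hc₂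
  rw [dist_eq_norm] at hxc
  have hfxc := abs_le.1 (f.abs_apply_le_norm hf (x - c))
  have h₁ := abs_le.1 (g₁.abs_apply_le_norm hg₁ (c + y))
  have h₂ := abs_le.1 (g₂.abs_apply_le_norm hg₂ (c + y))
  have hcy : ‖c + y‖ ≤ ‖x + y‖ + ‖x - c‖ := by
    rw [add_comm c]
    simpa using norm_sub_le (x + y) (x - c)
  simp only [map_add, map_sub] at hfxc h₁ h₂
  rcases abs_cases (f x) with ⟨hfx, -⟩ | ⟨hfx, -⟩ <;> rw [hfx] <;> linarith

theorem mul_abs_add_one_le_norm_add_of_two_le {f : X →L[ℝ] ℝ} (hf : ‖f‖ ≤ 1) {ε : ℝ}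
    (hε : ε ≤ 1) {x y : X} (hy : ‖y‖ = 1) (hx : 2 ≤ ε * ‖x‖) :
    (1 - ε) * (|f x| + 1) ≤ ‖x + y‖ := by
  have hfx := f.abs_apply_le_norm hf x
  have hxy : ‖x‖ ≤ ‖x + y‖ + ‖y‖ := by simpa using norm_sub_le (x + y) y
  have hε₀ : 0 < ε := by nlinarith [norm_nonneg x]
  nlinarith [mul_le_mul_of_nonneg_left hfx (sub_nonneg.2 hε)]

theorem WStarDiameterTwoProp.exists_abs_add_one_sub_le_norm_add (hd2 : WStarDiameterTwoProp X)
    {f : X →L[ℝ] ℝ} (hf : ‖f‖ ≤ 1) {t : Set X} (ht : t.Finite) {δ : ℝ} (hδ₀ : 0 < δ)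
    (hδ₂ : δ ≤ 2) :
    ∃ y : X, ‖y‖ = 1 ∧ ∀ x, ∀ c ∈ t, dist x c < δ → |f x| + 1 - 4 * δ ≤ ‖x + y‖ := by
  have hW := (WeakDual.hasBasis_nhds_dist_lt (StrongDual.toWeakDual f)).mem_of_mem
    (i := (t, δ)) ⟨ht, hδ₀⟩
  have hdiam := hd2 _ isOpen_interior ⟨f, hf, mem_interior_iff_mem_nhds.2 hW⟩
  obtain ⟨g₁, ⟨hg₁, hW₁⟩, g₂, ⟨hg₂, hW₂⟩, hg₁₂⟩ :=
    exists_lt_dist_of_lt_diam (d := 2 - δ) (by linarith) (by linarith)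
  obtain ⟨y, hy, hgy⟩ :=
    (g₁ - g₂).exists_norm_eq_one_lt_apply (by linarith) (dist_eq_norm g₁ g₂ ▸ hg₁₂)
  have h₁ := abs_le.1 (g₁.abs_apply_le_norm hg₁ y)
  have h₂ := abs_le.1 (g₂.abs_apply_le_norm hg₂ y)
  rw [hy] at h₁ h₂
  rw [sub_apply] at hgy
  exact ⟨y, hy, fun x c hc hxc => abs_add_one_sub_le_norm_add hf hg₁ hg₂ (by linarith)
    (by linarith) (interior_subset hW₁ c hc) (interior_subset hW₂ c hc) hxc⟩

theorem WStarDiameterTwoProp.exists_mul_abs_add_norm_le_norm_add (hd2 : WStarDiameterTwoProp X)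
    (E : Submodule ℝ X) [FiniteDimensional ℝ E] {f : X →L[ℝ] ℝ} (hf : ‖f‖ ≤ 1) {ε : ℝ}
    (hε₀ : 0 < ε) (hε₁ : ε ≤ 1) :
    ∃ y : X, ‖y‖ = 1 ∧ ∀ x ∈ E, (1 - ε) * (|f x| + ‖y‖) ≤ ‖x + y‖ := by
  obtain ⟨t, -, ht, hKt⟩ := finite_cover_balls_of_compact (e := ε / 4)
    ((isCompact_closedBall (0 : E) (2 / ε)).image continuous_subtype_val) (by positivity)
  obtain ⟨y, hy, hyt⟩ := hd2.exists_abs_add_one_sub_le_norm_add hf ht (δ := ε / 4)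
    (by positivity) (by linarith)
  refine ⟨y, hy, fun x hx => ?_⟩
  rw [hy]
  rcases le_or_gt (ε * ‖x‖) 2 with hxε | hxε
  · have hxK : x ∈ Subtype.val '' closedBall (0 : E) (2 / ε) :=
      ⟨⟨x, hx⟩, mem_closedBall_zero_iff.2 ((le_div_iff₀' hε₀).2 hxε), rfl⟩
    obtain ⟨c, hc, hxc⟩ := mem_iUnion₂.1 (hKt hxK)
    have := hyt x c hc hxc
    nlinarith [abs_nonneg (f x)]
  · exact mul_abs_add_one_le_norm_add_of_two_le hf hε₁ hy hxε.le

theorem WStarDiameterTwoProp.weaklyOctahedral (hd2 : WStarDiameterTwoProp X) :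
    WeaklyOctahedral X := by
  intro E hE f hf ε hε
  obtain ⟨y, hy, hyE⟩ :=
    hd2.exists_mul_abs_add_norm_le_norm_add E hf (lt_min hε one_pos) (min_le_right ε 1)
  refine ⟨y, hy, fun x hx => le_trans ?_ (hyE x hx)⟩
  gcongr
  exact min_le_left ε 1

end

theorem stmt_7_general (X : Type*) [NormedAddCommGroup X] [NormedSpace ℝ X] :
    WStarDiameterTwoProp X ↔ WeaklyOctahedral X :=
  ⟨WStarDiameterTwoProp.weaklyOctahedral, WeaklyOctahedral.wStarDiameterTwoProp⟩

theorem stmt_7 (X : Type*) [NormedAddCommGroup X] [NormedSpace ℝ X] [CompleteSpace X] [Nontrivial X] :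
    WStarDiameterTwoProp X ↔ WeaklyOctahedral X :=
  stmt_7_general X
end
end
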